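/- arXiv:0708.4157 — 8 statements merged into one kernel-verified Lean document; each statement's English description precedes it below -/
import Mathlib

section
/- Fix m ∈ ℤ with m ≥ 0. There exists a constant C_m such that for all real x with |x| > 3, ∫_ℝ e^{-|z|} (1+|x-z|)^m e^{-|x-z|} dz ≤ C_m e^{-|x|} (1+|x|)^{m+1}. -/
/-!
Write `|z| + |x - z| = |x| + u` with `u ≥ 0` the defect in the triangle inequality. The integrand
is then `e^{-|x|} (1 + |x - z|)^m e^{-u} ≤ e^{-|x|} (1 + |x|)^m (1 + u)^m e^{-u}`, and
`(1 + u)^m e^{-u} ≲ e^{-u/2}`. The defect vanishes on the segment between `0` and `x` and equals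
`2 min(|z|, |x - z|)` off it, so `e^{-u/2}` is at most the indicator of the segment plus
`e^{-|z|} + e^{-|x - z|}`, whose integral is `|x| + 4`.
-/

open MeasureTheory Real Set

lemma one_add_pow_le_mul_exp_half (k : ℕ) {t : ℝ} (ht : 0 ≤ t) :
    (1 + t) ^ k ≤ (2 * k + 1) ^ k * exp (t / 2) := by
  set n : ℝ := 2 * k + 1 with hn
  have hn1 : 1 ≤ n := by simp only [hn]; linarith [k.cast_nonneg (α := ℝ)]
  have hbase : 1 + t ≤ n * exp (t / n) :=
    calc 1 + t ≤ n * (1 + t / n) := by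
          rw [mul_one_add, mul_div_cancel₀ _ (by positivity)]; linarith
      _ ≤ n * exp (t / n) := by gcongr; linarith [add_one_le_exp (t / n)]
  calc (1 + t) ^ k ≤ (n * exp (t / n)) ^ k := by gcongr
    _ = n ^ k * exp (k * t / n) := by rw [mul_pow, ← exp_nat_mul, mul_div_assoc]
    _ ≤ n ^ k * exp (t / 2) := by
      refine mul_le_mul_of_nonneg_left (exp_le_exp.2 ?_) (by positivity)
      rw [div_le_div_iff₀ (by positivity) two_pos]
      nlinarith

lemma exp_neg_half_triangle_defect_le (x z : ℝ) :
    exp (-(|z| + |x - z| - |x|) / 2) ≤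
      (uIcc 0 x).indicator 1 z + exp (-|z|) + exp (-|x - z|) := by
  have hz := (exp_pos (-|z|)).le
  have hxz := (exp_pos (-|x - z|)).le
  by_cases hmem : z ∈ uIcc 0 x
  · have : exp (-(|z| + |x - z| - |x|) / 2) ≤ 1 := by
      rw [exp_le_one_iff]
      linarith [abs_sub_abs_le_abs_sub x z, abs_nonneg z]
    simp only [indicator_of_mem hmem, Pi.one_apply]
    linarith
  · rw [indicator_of_notMem hmem, zero_add]
    rw [mem_uIcc] at hmem
    have : 2 * |z| ≤ |z| + |x - z| - |x| ∨ 2 * |x - z| ≤ |z| + |x - z| - |x| := by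
      rcases le_total 0 z with h0 | h0 <;> rcases le_total z x with h1 | h1 <;>
        rcases le_total 0 x with h2 | h2 <;>
        simp only [abs_of_nonneg, abs_of_nonpos, sub_nonneg, sub_nonpos, *] <;>
        first | (left; linarith) | (right; linarith) | (exfalso; tauto)
    rcases this with h | h
    · linarith [exp_le_exp.2 (show -(|z| + |x - z| - |x|) / 2 ≤ -|z| by linarith)]
    · linarith [exp_le_exp.2 (show -(|z| + |x - z| - |x|) / 2 ≤ -|x - z| by linarith)]

lemma integral_exp_neg_abs : ∫ z : ℝ, exp (-|z|) = 2 := by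
  rw [integral_comp_abs (f := fun t => exp (-t)), integral_exp_neg_Ioi_zero, mul_one]

lemma integrable_exp_neg_abs : Integrable fun z : ℝ => exp (-|z|) :=
  .of_integral_ne_zero (by rw [integral_exp_neg_abs]; norm_num)

lemma integral_exp_neg_abs_sub (x : ℝ) : ∫ z : ℝ, exp (-|x - z|) = 2 := by
  rw [integral_sub_left_eq_self (fun t => exp (-|t|)), integral_exp_neg_abs]

lemma integrable_exp_neg_abs_sub (x : ℝ) : Integrable fun z : ℝ => exp (-|x - z|) :=
  .of_integral_ne_zero (by rw [integral_exp_neg_abs_sub]; norm_num)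

lemma integral_indicator_uIcc_add_exp_neg_abs_add_exp_neg_abs_sub (x : ℝ) :
    ∫ z, ((uIcc 0 x).indicator 1 z + exp (-|z|) + exp (-|x - z|)) = |x| + 4 := by
  have hind : Integrable ((uIcc 0 x).indicator (1 : ℝ → ℝ)) :=
    (integrable_indicator_iff measurableSet_uIcc).2 (integrableOn_const measure_Icc_lt_top.ne)
  have hsum : Integrable fun z => (uIcc 0 x).indicator 1 z + exp (-|z|) :=
    hind.add integrable_exp_neg_abs
  rw [integral_add hsum (integrable_exp_neg_abs_sub x), integral_add hind integrable_exp_neg_abs,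
    integral_indicator_one measurableSet_uIcc, Real.volume_real_interval,
    integral_exp_neg_abs, integral_exp_neg_abs_sub, sub_zero]
  ring

lemma exp_neg_abs_mul_one_add_abs_sub_pow_le (k : ℕ) (x z : ℝ) :
    exp (-|z|) * (1 + |x - z|) ^ k * exp (-|x - z|) ≤
      (2 * k + 1) ^ k * exp (-|x|) * (1 + |x|) ^ k * exp (-(|z| + |x - z| - |x|) / 2) := by
  set u := |z| + |x - z| - |x| with hu
  have hu0 : 0 ≤ u := by linarith [abs_sub_abs_le_abs_sub x z, abs_nonneg z]
  have hbase : 1 + |x - z| ≤ (1 + |x|) * (1 + u) := by nlinarith [abs_nonneg z, abs_nonneg x]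
  have hexp : exp (-|z|) * exp (-|x - z|) = exp (-|x|) * exp (-u) := by
    rw [← exp_add, ← exp_add, hu]; ring_nf
  calc exp (-|z|) * (1 + |x - z|) ^ k * exp (-|x - z|)
      = exp (-|x|) * ((1 + |x - z|) ^ k * exp (-u)) := by rw [mul_right_comm, hexp]; ring
    _ ≤ exp (-|x|) * (((1 + |x|) * (1 + u)) ^ k * exp (-u)) := by gcongr
    _ = exp (-|x|) * (1 + |x|) ^ k * ((1 + u) ^ k * exp (-u)) := by rw [mul_pow]; ring
    _ ≤ exp (-|x|) * (1 + |x|) ^ k * ((2 * k + 1) ^ k * exp (u / 2) * exp (-u)) := by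
      gcongr; exact one_add_pow_le_mul_exp_half k hu0
    _ = (2 * k + 1) ^ k * exp (-|x|) * (1 + |x|) ^ k * exp (-u / 2) := by
      rw [mul_assoc _ (exp _), ← exp_add]; ring_nf

theorem integral_exp_neg_abs_mul_one_add_abs_sub_pow_le (k : ℕ) (x : ℝ) :
    ∫ z, exp (-|z|) * (1 + |x - z|) ^ k * exp (-|x - z|) ≤
      4 * (2 * k + 1) ^ k * exp (-|x|) * (1 + |x|) ^ (k + 1) := by
  set c : ℝ := (2 * k + 1) ^ k * exp (-|x|) * (1 + |x|) ^ k
  have hc : 0 ≤ c := by positivity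
  have hmajorant : Integrable fun z => (uIcc 0 x).indicator 1 z + exp (-|z|) + exp (-|x - z|) :=
    .of_integral_ne_zero
      (by rw [integral_indicator_uIcc_add_exp_neg_abs_add_exp_neg_abs_sub]; positivity)
  calc ∫ z, exp (-|z|) * (1 + |x - z|) ^ k * exp (-|x - z|)
      ≤ ∫ z, c * ((uIcc 0 x).indicator 1 z + exp (-|z|) + exp (-|x - z|)) := by
        refine integral_mono_of_nonneg (.of_forall fun z => by positivity)
          (hmajorant.const_mul c) (.of_forall fun z => ?_)
        exact (exp_neg_abs_mul_one_add_abs_sub_pow_le k x z).trans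
          (mul_le_mul_of_nonneg_left (exp_neg_half_triangle_defect_le x z) hc)
    _ = c * (|x| + 4) := by
      rw [integral_const_mul, integral_indicator_uIcc_add_exp_neg_abs_add_exp_neg_abs_sub]
    _ ≤ c * (4 * (1 + |x|)) := by gcongr; linarith [abs_nonneg x]
    _ = 4 * (2 * k + 1) ^ k * exp (-|x|) * (1 + |x|) ^ (k + 1) := by ring

/-- Lemma 1, case `κ = -1`, `m ≥ 0`: for all `|x| > 3`,
`∫ e^{-|z|} (1+|x-z|)^m e^{-|x-z|} dz ≤ C e^{-|x|} (1+|x|)^{m+1}`. -/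
theorem integral_estimate_kappa_neg_one (m : ℤ) (hm : 0 ≤ m) :
    ∃ C : ℝ, 0 < C ∧ ∀ x : ℝ, 3 < |x| →
      ∫ z : ℝ, Real.exp (-|z|) * (1 + |x - z|) ^ m * Real.exp (-|x - z|) ≤
        C * Real.exp (-|x|) * (1 + |x|) ^ (m + 1) := by
  lift m to ℕ using hm
  refine ⟨4 * (2 * m + 1) ^ m, by positivity, fun x _ => ?_⟩
  rw [← Nat.cast_succ]
  simpa only [zpow_natCast] using integral_exp_neg_abs_mul_one_add_abs_sub_pow_le m x
end

section
/- Fix λ > 0 and y > 0. For all t with 0 < t < y and all ρ with |ρ| < 1, the function χ_λ(ρ,t) = (λt/(e^{λt} - e^{-λt})) · ((e^{λy} + e^{-λy})/(e^{λ(y-ρt)} + e^{-λ(y-ρt)})) satisfies (1/2)·(λt/(1-e^{-2λt}))·e^{-λt(1-ρ)} < χ_λ(ρ,t) ≤ 2·(λt/(1-e^{-2λt}))·e^{-λt(1-ρ)}. -/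
/-!
Write `a = λy` and `b = λρt`. Factoring `λt / (1 - e^{-2λt}) · e^{-λt}` out of both sides reduces the
claim to `e^b / 2 < cosh a / cosh (a - b) ≤ 2 e^b`. Since `2 e^b cosh (a - b) = e^a + e^{2b - a}`
while `2 cosh a = e^a + e^{-a}`, the upper bound only needs `e^{-a} ≤ e^a` (as `a ≥ 0`) and the
lower bound only needs `e^{2b - a} ≤ e^a` (as `b ≤ a`, because `ρt < t < y`).
-/

open Real

theorem two_mul_exp_mul_cosh_sub (a b : ℝ) :
    2 * exp b * cosh (a - b) = exp a + exp (2 * b - a) := by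
  have h₁ : exp b * exp (a - b) = exp a := by rw [← exp_add]; ring_nf
  have h₂ : exp b * exp (-(a - b)) = exp (2 * b - a) := by rw [← exp_add]; ring_nf
  rw [cosh_eq]
  linear_combination h₁ + h₂

theorem cosh_div_cosh_sub_le {a : ℝ} (b : ℝ) (ha : 0 ≤ a) :
    cosh a / cosh (a - b) ≤ 2 * exp b := by
  rw [div_le_iff₀ (cosh_pos _), two_mul_exp_mul_cosh_sub, cosh_eq]
  have : exp (-a) ≤ exp a := exp_le_exp.2 (by linarith)
  linarith [exp_pos (2 * b - a)]

theorem exp_div_two_lt_cosh_div_cosh_sub {a b : ℝ} (hba : b ≤ a) :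
    exp b / 2 < cosh a / cosh (a - b) := by
  rw [lt_div_iff₀ (cosh_pos _), cosh_eq a]
  have hsum := two_mul_exp_mul_cosh_sub a b
  have hle : exp (2 * b - a) ≤ exp a := exp_le_exp.2 (by linarith)
  linarith [exp_pos (-a)]

theorem exp_add_exp_neg_div (a c : ℝ) :
    (exp a + exp (-a)) / (exp c + exp (-c)) = cosh a / cosh c := by
  rw [cosh_eq, cosh_eq, div_div_div_cancel_right₀ two_ne_zero]

theorem div_exp_sub_exp_neg (c x : ℝ) :
    c / (exp x - exp (-x)) = c / (1 - exp (-(2 * x))) * exp (-x) := by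
  have : exp x - exp (-x) = (1 - exp (-(2 * x))) * exp x := by
    rw [sub_mul, one_mul, ← exp_add]; ring_nf
  rw [this, ← div_div, div_eq_mul_inv _ (exp x), ← exp_neg]

theorem div_one_sub_exp_neg_two_mul_pos {x : ℝ} (hx : 0 < x) :
    0 < x / (1 - exp (-(2 * x))) :=
  div_pos hx (sub_pos.2 (exp_lt_one_iff.2 (by linarith)))

theorem chi_pointwise_bounds_general (lam y : ℝ) (hlam : 0 < lam)
    (t ρ : ℝ) (ht₀ : 0 < t) (hty : t < y) (hρ : |ρ| < 1) :
    (1 / 2) * (lam * t / (1 - Real.exp (-(2 * lam * t)))) * Real.exp (-(lam * t * (1 - ρ))) <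
      (lam * t / (Real.exp (lam * t) - Real.exp (-(lam * t)))) *
        ((Real.exp (lam * y) + Real.exp (-(lam * y))) /
          (Real.exp (lam * (y - ρ * t)) + Real.exp (-(lam * (y - ρ * t))))) ∧
    (lam * t / (Real.exp (lam * t) - Real.exp (-(lam * t)))) *
        ((Real.exp (lam * y) + Real.exp (-(lam * y))) /
          (Real.exp (lam * (y - ρ * t)) + Real.exp (-(lam * (y - ρ * t))))) ≤
      2 * (lam * t / (1 - Real.exp (-(2 * lam * t)))) * Real.exp (-(lam * t * (1 - ρ))) := by
  have hρt : ρ * t ≤ y := by nlinarith [le_abs_self ρ]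
  have hfactor : 0 < lam * t / (1 - exp (-(2 * (lam * t)))) * exp (-(lam * t)) :=
    mul_pos (div_one_sub_exp_neg_two_mul_pos (by positivity)) (exp_pos _)
  have hexp : exp (-(lam * t * (1 - ρ))) = exp (-(lam * t)) * exp (lam * (ρ * t)) := by
    rw [← exp_add]; ring_nf
  rw [mul_assoc 2 lam t, div_exp_sub_exp_neg, exp_add_exp_neg_div, hexp, mul_sub]
  constructor
  · have := mul_lt_mul_of_pos_left
      (exp_div_two_lt_cosh_div_cosh_sub (mul_le_mul_of_nonneg_left hρt hlam.le)) hfactor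
    linarith
  · have := mul_le_mul_of_nonneg_left
      (cosh_div_cosh_sub_le (lam * (ρ * t)) (by nlinarith : 0 ≤ lam * y)) hfactor.le
    linarith

/-- Lemma 2(a): pointwise bounds for `χ_λ(ρ,t)`. -/
theorem chi_pointwise_bounds (lam y : ℝ) (hlam : 0 < lam) (hy : 0 < y)
    (t ρ : ℝ) (ht₀ : 0 < t) (hty : t < y) (hρ : |ρ| < 1) :
    (1 / 2) * (lam * t / (1 - Real.exp (-(2 * lam * t)))) * Real.exp (-(lam * t * (1 - ρ))) <
      (lam * t / (Real.exp (lam * t) - Real.exp (-(lam * t)))) *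
        ((Real.exp (lam * y) + Real.exp (-(lam * y))) /
          (Real.exp (lam * (y - ρ * t)) + Real.exp (-(lam * (y - ρ * t))))) ∧
    (lam * t / (Real.exp (lam * t) - Real.exp (-(lam * t)))) *
        ((Real.exp (lam * y) + Real.exp (-(lam * y))) /
          (Real.exp (lam * (y - ρ * t)) + Real.exp (-(lam * (y - ρ * t))))) ≤
      2 * (lam * t / (1 - Real.exp (-(2 * lam * t)))) * Real.exp (-(lam * t * (1 - ρ))) :=
  chi_pointwise_bounds_general lam y hlam t ρ ht₀ hty hρ
end

section
/- Fix λ > 0 and y > 0. For all t with 0 < t < y, the integral ∫_{-1}^{1} χ_λ(ρ,t) dρ satisfies 1/2 ≤ ∫_{-1}^{1} χ_λ(ρ,t) dρ ≤ 2, where χ_λ(ρ,t) = (λt/(e^{λt} - e^{-λt})) · ((e^{λy} + e^{-λy})/(e^{λ(y-ρt)} + e^{-λ(y-ρt)})). -/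
/-!
Write `s = λt`. Since `cosh x` lies between `eˣ/2` and `eˣ` for `x ≥ 0`, and both `λy` and
`λ(y - ρt)` are nonnegative, the ratio `cosh(λy)/cosh(λ(y - ρt))` lies within a factor `2` of
`e^{sρ}`. The prefactor `s/(eˢ - e⁻ˢ)` is exactly the reciprocal of `∫_{-1}^{1} e^{sρ} dρ`.
-/

open Real

lemma exp_sub_div_two_le_exp_add_exp_neg_div {a b : ℝ} (hb : 0 ≤ b) :
    exp (a - b) / 2 ≤ (exp a + exp (-a)) / (exp b + exp (-b)) := by
  have hden : exp b + exp (-b) ≤ 2 * exp b := by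
    linarith [exp_le_exp.2 (neg_le_self hb)]
  calc exp (a - b) / 2 = exp a / (2 * exp b) := by rw [exp_sub]; ring
    _ ≤ (exp a + exp (-a)) / (exp b + exp (-b)) :=
      div_le_div₀ (by positivity) (by linarith [exp_pos (-a)]) (by positivity) hden

lemma exp_add_exp_neg_div_le_two_mul_exp_sub {a b : ℝ} (ha : 0 ≤ a) :
    (exp a + exp (-a)) / (exp b + exp (-b)) ≤ 2 * exp (a - b) := by
  have hnum : exp a + exp (-a) ≤ 2 * exp a := by
    linarith [exp_le_exp.2 (neg_le_self ha)]
  calc (exp a + exp (-a)) / (exp b + exp (-b)) ≤ 2 * exp a / exp b :=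
      div_le_div₀ (by positivity) hnum (exp_pos b) (by linarith [exp_pos (-b)])
    _ = 2 * exp (a - b) := by rw [exp_sub]; ring

lemma integral_exp_mul_neg_one_one {c : ℝ} (hc : c ≠ 0) :
    ∫ ρ in (-1 : ℝ)..1, exp (c * ρ) = (exp c - exp (-c)) / c := by
  rw [intervalIntegral.integral_comp_mul_left (fun x => exp x) hc, integral_exp,
    mul_one, mul_neg_one, smul_eq_mul, inv_mul_eq_div]

lemma integral_exp_mul_neg_one_one_normalized {s : ℝ} (hs : 0 < s) :
    ∫ ρ in (-1 : ℝ)..1, s / (exp s - exp (-s)) * exp (s * ρ) = 1 := by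
  have hsinh : exp s - exp (-s) ≠ 0 := by
    linarith [exp_lt_exp.2 (neg_lt_self hs)]
  rw [intervalIntegral.integral_const_mul, integral_exp_mul_neg_one_one hs.ne']
  field_simp

lemma half_le_integral_and_integral_le_two_of_exp_bounds {s : ℝ} (hs : 0 < s) {f : ℝ → ℝ}
    (hf : IntervalIntegrable f MeasureTheory.volume (-1) 1)
    (hbounds : ∀ ρ ∈ Set.Icc (-1 : ℝ) 1, exp (s * ρ) / 2 ≤ f ρ ∧ f ρ ≤ 2 * exp (s * ρ)) :
    1 / 2 ≤ ∫ ρ in (-1 : ℝ)..1, s / (exp s - exp (-s)) * f ρ ∧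
      ∫ ρ in (-1 : ℝ)..1, s / (exp s - exp (-s)) * f ρ ≤ 2 := by
  set K := s / (exp s - exp (-s))
  have hK : 0 ≤ K := div_nonneg hs.le (by linarith [exp_lt_exp.2 (neg_lt_self hs)])
  have hKf : IntervalIntegrable (fun ρ => K * f ρ) MeasureTheory.volume (-1) 1 :=
    hf.const_mul K
  have hexp (m : ℝ) :
      IntervalIntegrable (fun ρ => m * (K * exp (s * ρ))) MeasureTheory.volume (-1) 1 :=
    (by fun_prop : Continuous _).intervalIntegrable _ _
  have hmass (m : ℝ) : ∫ ρ in (-1 : ℝ)..1, m * (K * exp (s * ρ)) = m := by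
    rw [intervalIntegral.integral_const_mul, integral_exp_mul_neg_one_one_normalized hs, mul_one]
  constructor
  · calc 1 / 2 = ∫ ρ in (-1 : ℝ)..1, 1 / 2 * (K * exp (s * ρ)) := (hmass _).symm
      _ ≤ ∫ ρ in (-1 : ℝ)..1, K * f ρ :=
        intervalIntegral.integral_mono_on (by norm_num) (hexp _) hKf fun ρ hρ => by
          linarith [mul_le_mul_of_nonneg_left (hbounds ρ hρ).1 hK]
  · calc ∫ ρ in (-1 : ℝ)..1, K * f ρ ≤ ∫ ρ in (-1 : ℝ)..1, 2 * (K * exp (s * ρ)) :=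
        intervalIntegral.integral_mono_on (by norm_num) hKf (hexp _) fun ρ hρ => by
          linarith [mul_le_mul_of_nonneg_left (hbounds ρ hρ).2 hK]
      _ = 2 := hmass _

/-- Lemma 2(b): `1/2 ≤ ∫_{-1}^1 χ_λ(ρ,t) dρ ≤ 2`. -/
theorem chi_integral_bounds (lam y : ℝ) (hlam : 0 < lam) (hy : 0 < y)
    (t : ℝ) (ht₀ : 0 < t) (hty : t < y) :
    (1 / 2 : ℝ) ≤
      (∫ ρ in (-1 : ℝ)..1,
        (lam * t / (Real.exp (lam * t) - Real.exp (-(lam * t)))) *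
          ((Real.exp (lam * y) + Real.exp (-(lam * y))) /
            (Real.exp (lam * (y - ρ * t)) + Real.exp (-(lam * (y - ρ * t)))))) ∧
      (∫ ρ in (-1 : ℝ)..1,
        (lam * t / (Real.exp (lam * t) - Real.exp (-(lam * t)))) *
          ((Real.exp (lam * y) + Real.exp (-(lam * y))) /
            (Real.exp (lam * (y - ρ * t)) + Real.exp (-(lam * (y - ρ * t)))))) ≤ 2 := by
  have hexponent (ρ : ℝ) : lam * y - lam * (y - ρ * t) = lam * t * ρ := by ring
  refine half_le_integral_and_integral_le_two_of_exp_bounds (mul_pos hlam ht₀)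
    (f := fun ρ => (exp (lam * y) + exp (-(lam * y))) /
      (exp (lam * (y - ρ * t)) + exp (-(lam * (y - ρ * t)))))
    ((continuous_const.div (by fun_prop) fun _ => by positivity).intervalIntegrable _ _)
    fun ρ hρ => ⟨?_, ?_⟩
  · have hb : 0 ≤ lam * (y - ρ * t) := mul_nonneg hlam.le
      (sub_nonneg.2 ((mul_le_of_le_one_left ht₀.le hρ.2).trans hty.le))
    simpa only [hexponent] using exp_sub_div_two_le_exp_add_exp_neg_div (a := lam * y) hb
  · simpa only [hexponent] using exp_add_exp_neg_div_le_two_mul_exp_sub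
      (b := lam * (y - ρ * t)) (mul_nonneg hlam.le hy.le)
end

section
/- For λ > 0, y > 0, 0 < t < y and |ρ| ≤ 1 (so y - ρt > 0), one has (1/2)·e^{λρt} ≤ (e^{λy} + e^{-λy})/(e^{λ(y-ρt)} + e^{-λ(y-ρt)}) ≤ 2·e^{λρt}. -/
/-!
Since `e^x / 2 ≤ cosh x ≤ e^x` for `x ≥ 0`, a ratio `cosh a / cosh b` of two such values lies
within a factor `2` of `e^(a - b)`. Here `a = λy`, `b = λ(y - ρt)` and `a - b = λρt`.
-/

namespace Real

lemma exp_le_two_mul_cosh (x : ℝ) : exp x ≤ 2 * cosh x := by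
  rw [cosh_eq]
  linarith [exp_pos (-x)]

lemma cosh_le_exp_of_nonneg {x : ℝ} (hx : 0 ≤ x) : cosh x ≤ exp x := by
  rw [← cosh_add_sinh]
  linarith [sinh_nonneg_iff.mpr hx]

lemma exp_sub_div_two_le_cosh_div_cosh (a : ℝ) {b : ℝ} (hb : 0 ≤ b) :
    exp (a - b) / 2 ≤ cosh a / cosh b :=
  calc exp (a - b) / 2 = (exp a / 2) / exp b := by rw [exp_sub, div_right_comm]
    _ ≤ cosh a / cosh b := div_le_div₀ (cosh_pos a).le (by linarith [exp_le_two_mul_cosh a])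
      (cosh_pos b) (cosh_le_exp_of_nonneg hb)

lemma cosh_div_cosh_le_two_mul_exp_sub {a : ℝ} (ha : 0 ≤ a) (b : ℝ) :
    cosh a / cosh b ≤ 2 * exp (a - b) :=
  calc cosh a / cosh b ≤ exp a / (exp b / 2) := div_le_div₀ (exp_pos a).le
        (cosh_le_exp_of_nonneg ha) (by positivity) (by linarith [exp_le_two_mul_cosh b])
    _ = 2 * exp (a - b) := by rw [exp_sub]; field_simp

end Real

theorem cosh_ratio_bounds_general (lam y t ρ : ℝ) (hlam : 0 < lam)
    (ht₀ : 0 < t) (hty : t < y) (hρ : |ρ| ≤ 1) :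
    (1 / 2) * Real.exp (lam * ρ * t) ≤
      (Real.exp (lam * y) + Real.exp (-(lam * y))) /
        (Real.exp (lam * (y - ρ * t)) + Real.exp (-(lam * (y - ρ * t)))) ∧
    (Real.exp (lam * y) + Real.exp (-(lam * y))) /
        (Real.exp (lam * (y - ρ * t)) + Real.exp (-(lam * (y - ρ * t)))) ≤
      2 * Real.exp (lam * ρ * t) := by
  have hρt : ρ * t ≤ t := by
    calc ρ * t ≤ |ρ| * t := mul_le_mul_of_nonneg_right (le_abs_self ρ) ht₀.le
      _ ≤ t := mul_le_of_le_one_left ht₀.le hρ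
  have ha : 0 ≤ lam * y := mul_nonneg hlam.le (by linarith)
  have hb : 0 ≤ lam * (y - ρ * t) := mul_nonneg hlam.le (by linarith)
  have hratio : ∀ a b : ℝ, (Real.exp a + Real.exp (-a)) / (Real.exp b + Real.exp (-b)) =
      Real.cosh a / Real.cosh b := by
    intro a b
    rw [Real.cosh_eq, Real.cosh_eq, div_div_div_cancel_right₀ two_ne_zero]
  have hdiff : lam * ρ * t = lam * y - lam * (y - ρ * t) := by ring
  rw [hratio, hdiff]
  exact ⟨by linarith [Real.exp_sub_div_two_le_cosh_div_cosh (lam * y) hb],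
    Real.cosh_div_cosh_le_two_mul_exp_sub ha _⟩

/-- Ratio of hyperbolic cosines comparable to `e^{λρt}`. -/
theorem cosh_ratio_bounds (lam y t ρ : ℝ) (hlam : 0 < lam) (hy : 0 < y)
    (ht₀ : 0 < t) (hty : t < y) (hρ : |ρ| ≤ 1) :
    (1 / 2) * Real.exp (lam * ρ * t) ≤
      (Real.exp (lam * y) + Real.exp (-(lam * y))) /
        (Real.exp (lam * (y - ρ * t)) + Real.exp (-(lam * (y - ρ * t)))) ∧
    (Real.exp (lam * y) + Real.exp (-(lam * y))) /
        (Real.exp (lam * (y - ρ * t)) + Real.exp (-(lam * (y - ρ * t)))) ≤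
      2 * Real.exp (lam * ρ * t) :=
  cosh_ratio_bounds_general lam y t ρ hlam ht₀ hty hρ
end

section
/- There is an absolute constant C such that for all λ > 0, y > 0 and 0 < t < y, ∫_{-1}^{1} χ_λ(ρ,t) · |tanh(λ(y-ρt)) - 1| dρ ≤ C·e^{-2λ(y-t)}, where χ_λ(ρ,t) = (λt/(e^{λt} - e^{-λt})) · ((e^{λy} + e^{-λy})/(e^{λ(y-ρt)} + e^{-λ(y-ρt)})). -/
/-- Lemma 3(c): `∫_{-1}^1 χ_λ(ρ,t) |tanh(λ(y-ρt)) - 1| dρ ≤ C e^{-2λ(y-t)}`. -/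
theorem chi_tanh_integral_bound :
    ∃ C : ℝ, 0 < C ∧ ∀ lam y t : ℝ, 0 < lam → 0 < y → 0 < t → t < y →
      (∫ ρ in (-1 : ℝ)..1,
        (lam * t / (Real.exp (lam * t) - Real.exp (-(lam * t)))) *
          ((Real.exp (lam * y) + Real.exp (-(lam * y))) /
            (Real.exp (lam * (y - ρ * t)) + Real.exp (-(lam * (y - ρ * t))))) *
          |Real.tanh (lam * (y - ρ * t)) - 1|) ≤
        C * Real.exp (-(2 * lam * (y - t))) := by
  refine ⟨4, by norm_num, ?_⟩
  intro lam y t hlam hy ht hty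
  have ha : 0 < lam * t := mul_pos hlam ht
  set a := lam * t with ha_def
  have hD : 0 < Real.exp a - Real.exp (-a) := by
    have : Real.exp (-a) < Real.exp a := Real.exp_lt_exp.mpr (by linarith)
    linarith
  set c : ℝ := 4 * (a / (Real.exp a - Real.exp (-a))) * Real.exp (-(2 * lam * y)) with hc_def
  have hcpos : 0 < c := by positivity
  -- pointwise bound
  have hpt : ∀ ρ ∈ Set.Icc (-1:ℝ) 1,
      (a / (Real.exp a - Real.exp (-a))) *
          ((Real.exp (lam * y) + Real.exp (-(lam * y))) /
            (Real.exp (lam * (y - ρ * t)) + Real.exp (-(lam * (y - ρ * t))))) *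
          |Real.tanh (lam * (y - ρ * t)) - 1|
        ≤ c * Real.exp (3 * a * ρ) := by
    intro ρ _
    set u := lam * (y - ρ * t) with hu_def
    have hSpos : 0 < Real.exp u + Real.exp (-u) := by positivity
    have htanh' : Real.tanh u = (Real.exp u - Real.exp (-u)) / (Real.exp u + Real.exp (-u)) := by
      rw [Real.tanh_eq_sinh_div_cosh, Real.sinh_eq, Real.cosh_eq]
      field_simp
    have htanh : |Real.tanh u - 1| = 2 * Real.exp (-u) / (Real.exp u + Real.exp (-u)) := by
      have h1 : Real.tanh u - 1 = -(2 * Real.exp (-u) / (Real.exp u + Real.exp (-u))) := by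
        rw [htanh']
        field_simp
        ring
      rw [h1, abs_neg, abs_of_nonneg (by positivity)]
    rw [htanh]
    have hEy : Real.exp (-(lam * y)) ≤ Real.exp (lam * y) :=
      Real.exp_le_exp.mpr (by nlinarith)
    have hEu : Real.exp u ≤ Real.exp u + Real.exp (-u) := by
      nlinarith [Real.exp_pos (-u)]
    have hstep : (a / (Real.exp a - Real.exp (-a))) *
          ((Real.exp (lam * y) + Real.exp (-(lam * y))) /
            (Real.exp u + Real.exp (-u))) *
          (2 * Real.exp (-u) / (Real.exp u + Real.exp (-u)))
        ≤ (a / (Real.exp a - Real.exp (-a))) *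
            (2 * Real.exp (lam * y) / Real.exp u) *
            (2 * Real.exp (-u) / Real.exp u) := by
      have hr1 : (Real.exp (lam * y) + Real.exp (-(lam * y))) /
            (Real.exp u + Real.exp (-u)) ≤ 2 * Real.exp (lam * y) / Real.exp u :=
        div_le_div₀ (by positivity) (by linarith) (Real.exp_pos u) hEu
      have hr2 : 2 * Real.exp (-u) / (Real.exp u + Real.exp (-u))
          ≤ 2 * Real.exp (-u) / Real.exp u :=
        div_le_div₀ (by positivity) le_rfl (Real.exp_pos u) hEu
      exact mul_le_mul (mul_le_mul_of_nonneg_left hr1 (by positivity)) hr2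
        (by positivity) (by positivity)
    refine hstep.trans (le_of_eq ?_)
    have hexp2 : Real.exp (lam * y - u) * Real.exp (-u - u)
        = Real.exp (-(2 * lam * y)) * Real.exp (3 * a * ρ) := by
      rw [← Real.exp_add, ← Real.exp_add]
      congr 1
      simp only [hu_def, ha_def]; ring
    calc (a / (Real.exp a - Real.exp (-a))) *
            (2 * Real.exp (lam * y) / Real.exp u) *
            (2 * Real.exp (-u) / Real.exp u)
        = 4 * (a / (Real.exp a - Real.exp (-a))) *
            (Real.exp (lam * y) / Real.exp u * (Real.exp (-u) / Real.exp u)) := by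
          ring
      _ = 4 * (a / (Real.exp a - Real.exp (-a))) *
            (Real.exp (lam * y - u) * Real.exp (-u - u)) := by
          rw [Real.exp_sub, Real.exp_sub]
      _ = 4 * (a / (Real.exp a - Real.exp (-a))) *
            (Real.exp (-(2 * lam * y)) * Real.exp (3 * a * ρ)) := by rw [hexp2]
      _ = c * Real.exp (3 * a * ρ) := by rw [hc_def]; ring
  -- integrability
  have hFc : Continuous fun ρ : ℝ =>
      (a / (Real.exp a - Real.exp (-a))) *
          ((Real.exp (lam * y) + Real.exp (-(lam * y))) /
            (Real.exp (lam * (y - ρ * t)) + Real.exp (-(lam * (y - ρ * t))))) *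
          |Real.tanh (lam * (y - ρ * t)) - 1| := by
    apply Continuous.mul
    · apply Continuous.mul continuous_const
      apply Continuous.div continuous_const (by fun_prop)
      intro x; positivity
    · apply Continuous.abs
      have htc : Continuous Real.tanh := by
        have : Real.tanh = fun x => Real.sinh x / Real.cosh x :=
          funext Real.tanh_eq_sinh_div_cosh
        rw [this]
        exact Real.continuous_sinh.div Real.continuous_cosh fun x => (Real.cosh_pos x).ne'
      exact (htc.comp (by fun_prop)).sub continuous_const
  have hGc : Continuous fun ρ : ℝ => c * Real.exp (3 * a * ρ) := by fun_prop
  have hmono := intervalIntegral.integral_mono_on (by norm_num : (-1:ℝ) ≤ 1)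
    (hFc.intervalIntegrable (μ := MeasureTheory.volume) _ _)
    (hGc.intervalIntegrable (μ := MeasureTheory.volume) _ _) hpt
  refine hmono.trans ?_
  -- compute the right integral
  have hint : (∫ ρ in (-1:ℝ)..1, c * Real.exp (3 * a * ρ))
      = c * ((Real.exp (3 * a) - Real.exp (-(3 * a))) / (3 * a)) := by
    rw [intervalIntegral.integral_const_mul]
    congr 1
    have h3a : (3 * a) ≠ 0 := by positivity
    rw [intervalIntegral.integral_comp_mul_left (fun x => Real.exp x) h3a]
    rw [integral_exp, smul_eq_mul]
    rw [show (3 : ℝ) * a * -1 = -(3 * a) by ring]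
    field_simp
  rw [hint]
  -- final numeric inequality
  have hA : Real.exp (3 * a) = (Real.exp a) ^ 3 := by
    rw [← Real.exp_nat_mul]; congr 1
  have hB : Real.exp (-(3 * a)) = (Real.exp (-a)) ^ 3 := by
    rw [← Real.exp_nat_mul]; congr 1; push_cast; ring
  have hA2 : Real.exp (2 * a) = (Real.exp a) ^ 2 := by
    rw [← Real.exp_nat_mul]; congr 1
  have hAB : Real.exp a * Real.exp (-a) = 1 := by
    rw [← Real.exp_add]; simp
  have hRHS : Real.exp (-(2 * lam * (y - t))) = Real.exp (-(2 * lam * y)) * Real.exp (2 * a) := by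
    rw [← Real.exp_add]; congr 1; rw [ha_def]; ring
  rw [hRHS, hc_def]
  have hkey : (Real.exp (3 * a) - Real.exp (-(3 * a))) / (3 * a) * (a / (Real.exp a - Real.exp (-a)))
      ≤ Real.exp (2 * a) := by
    rw [div_mul_div_comm, div_le_iff₀ (by positivity)]
    rw [hA, hB, hA2]
    have h1 : 0 < Real.exp (-a) := Real.exp_pos _
    have h2 : Real.exp (-a) ≤ Real.exp a := Real.exp_le_exp.mpr (by linarith)
    nlinarith [mul_nonneg (sq_nonneg (Real.exp a - Real.exp (-a)))
      (by positivity : (0:ℝ) ≤ 2 * Real.exp a + Real.exp (-a)), ha]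
  calc 4 * (a / (Real.exp a - Real.exp (-a))) * Real.exp (-(2 * lam * y)) *
        ((Real.exp (3 * a) - Real.exp (-(3 * a))) / (3 * a))
      = 4 * Real.exp (-(2 * lam * y)) *
        ((Real.exp (3 * a) - Real.exp (-(3 * a))) / (3 * a) *
          (a / (Real.exp a - Real.exp (-a)))) := by ring
    _ ≤ 4 * Real.exp (-(2 * lam * y)) * Real.exp (2 * a) := by
        gcongr
    _ = 4 * (Real.exp (-(2 * lam * y)) * Real.exp (2 * a)) := by ring
end

section
/- For λ > 0, y > 0, 0 < t < y and |ρ| ≤ 1, one has |(e^{-λy} + e^{λy})/(e^{-λ(y-ρt)} + e^{λ(y-ρt)}) - e^{λρt}| ≤ e^{λρt}·(e^{-2λy} + e^{-2λ(y-t)}). -/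
/-!
With `a = λy` and `b = λ(y - ρt)` the ratio is `cosh a / cosh b` and `λρt = a - b`. For all real
`a, b` the error `cosh a / cosh b - e^{a-b}` equals `(e^{-a} - e^{a-2b}) / (2 cosh b)`, which
`2 cosh b ≥ e^b` bounds by `e^{a-b} (e^{-2a} + e^{-2b})`; finally `b ≥ λ(y - t)` because `ρt ≤ t`.
-/

open Real

lemma cosh_sub_exp_sub_mul_cosh (a b : ℝ) :
    cosh a - exp (a - b) * cosh b = (exp (-a) - exp (a - 2 * b)) / 2 := by
  rw [cosh_eq, cosh_eq, mul_div_assoc', mul_add, ← exp_add, ← exp_add]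
  ring_nf

lemma exp_div_two_le_cosh (x : ℝ) : exp x / 2 ≤ cosh x := by
  rw [cosh_eq]
  gcongr
  exact le_add_of_nonneg_right (exp_nonneg _)

lemma abs_cosh_div_cosh_sub_exp_le (a b : ℝ) :
    |cosh a / cosh b - exp (a - b)| ≤ exp (a - b) * (exp (-(2 * a)) + exp (-(2 * b))) := by
  have hcosh : 0 < cosh b := cosh_pos b
  have herr : cosh a / cosh b - exp (a - b) = (exp (-a) - exp (a - 2 * b)) / 2 / cosh b := by
    rw [← cosh_sub_exp_sub_mul_cosh, sub_div, mul_div_cancel_right₀ _ hcosh.ne']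
  have hnum : |exp (-a) - exp (a - 2 * b)| ≤ exp (-a) + exp (a - 2 * b) :=
    (abs_sub _ _).trans_eq (by rw [abs_of_pos (exp_pos _), abs_of_pos (exp_pos _)])
  calc |cosh a / cosh b - exp (a - b)|
      = |exp (-a) - exp (a - 2 * b)| / 2 / cosh b := by
        rw [herr, abs_div, abs_div, abs_two, abs_of_pos hcosh]
    _ ≤ (exp (-a) + exp (a - 2 * b)) / 2 / (exp b / 2) := by
        gcongr
        exact exp_div_two_le_cosh b
    _ = exp (a - b) * (exp (-(2 * a)) + exp (-(2 * b))) := by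
        rw [div_div_div_cancel_right₀ two_ne_zero, add_div, ← exp_sub, ← exp_sub, mul_add,
          ← exp_add, ← exp_add]
        ring_nf

theorem cosh_ratio_close_to_exp_general (lam y t ρ : ℝ) (hlam : 0 < lam)
    (ht₀ : 0 < t) (hρ : |ρ| ≤ 1) :
    |(Real.exp (-(lam * y)) + Real.exp (lam * y)) /
        (Real.exp (-(lam * (y - ρ * t))) + Real.exp (lam * (y - ρ * t))) -
      Real.exp (lam * ρ * t)| ≤
      Real.exp (lam * ρ * t) *
        (Real.exp (-(2 * lam * y)) + Real.exp (-(2 * lam * (y - t)))) := by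
  have hratio : ∀ a b : ℝ, (exp (-a) + exp a) / (exp (-b) + exp b) = cosh a / cosh b := by
    intro a b
    rw [cosh_eq, cosh_eq, div_div_div_cancel_right₀ two_ne_zero, add_comm (exp a),
      add_comm (exp b)]
  have hshift : lam * (y - t) ≤ lam * (y - ρ * t) := by
    gcongr
    exact mul_le_of_le_one_left ht₀.le (le_of_abs_le hρ)
  have key := abs_cosh_div_cosh_sub_exp_le (lam * y) (lam * (y - ρ * t))
  rw [hratio, show lam * ρ * t = lam * y - lam * (y - ρ * t) by ring]
  refine key.trans ?_
  rw [mul_assoc 2 lam y, mul_assoc 2 lam (y - t)]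
  gcongr ?_ * (_ + exp ?_)
  linarith

/-- The ratio of hyperbolic cosines is close to `e^{λρt}`. -/
theorem cosh_ratio_close_to_exp (lam y t ρ : ℝ) (hlam : 0 < lam) (hy : 0 < y)
    (ht₀ : 0 < t) (hty : t < y) (hρ : |ρ| ≤ 1) :
    |(Real.exp (-(lam * y)) + Real.exp (lam * y)) /
        (Real.exp (-(lam * (y - ρ * t))) + Real.exp (lam * (y - ρ * t))) -
      Real.exp (lam * ρ * t)| ≤
      Real.exp (lam * ρ * t) *
        (Real.exp (-(2 * lam * y)) + Real.exp (-(2 * lam * (y - t)))) :=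
  cosh_ratio_close_to_exp_general lam y t ρ hlam ht₀ hρ
end

section
/- For every m ∈ ℕ there is a constant C_m such that for all λ ≥ 1 and y > 0, ∫_0^∞ (e^{-2λs}/(1 - e^{-2λ(s+y)}))·(1 + s^m) ds ≤ C_m·(1/λ)·(1 + log(1 + 1/(λy))). -/
open MeasureTheory Set Real
open scoped Nat

/-! For `x > 0` one has `1 / (1 - e^{-x}) ≤ 1 + 1 / x`, and `1 + s^m ≤ (m! + 1) e^{λ s}` when
`λ ≥ 1`, so the integrand is at most `(m! + 1) e^{-λ s} (1 + 1 / (2λ(s + y)))`. The first term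
integrates to `1/λ`. In the second, `e^{-λ s} / (s + y)` is bounded by `1 / (s + y)` on `(0, 1/λ]`,
which produces the logarithm, and by `λ e^{-λ s}` beyond, which contributes at most `1`. -/

theorem inv_one_sub_exp_neg_le {x : ℝ} (hx : 0 < x) : (1 - exp (-x))⁻¹ ≤ 1 + x⁻¹ := by
  have hexp : exp (-x) ≤ (1 + x)⁻¹ := by
    rw [exp_neg]
    exact inv_anti₀ (by positivity) (by linarith [add_one_le_exp x])
  calc (1 - exp (-x))⁻¹ ≤ (1 - (1 + x)⁻¹)⁻¹ := by
        gcongr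
        rw [sub_pos, inv_lt_one₀ (by positivity)]
        linarith
    _ = 1 + x⁻¹ := by field_simp [hx.ne']; ring

theorem one_add_pow_le_mul_exp {s : ℝ} (hs : 0 ≤ s) (m : ℕ) :
    1 + s ^ m ≤ (m ! + 1) * exp s := by
  have hpow : s ^ m ≤ m ! * exp s := by
    have := pow_div_factorial_le_exp s hs m
    rwa [div_le_iff₀ (by positivity), mul_comm] at this
  nlinarith [one_le_exp hs]

theorem integrableOn_exp_neg_mul_Ioi {c : ℝ} (hc : 0 < c) (a : ℝ) :
    IntegrableOn (fun s => exp (-(c * s))) (Ioi a) := by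
  simpa only [neg_mul] using exp_neg_integrableOn_Ioi a hc

theorem integral_exp_neg_mul_Ioi_zero {c : ℝ} (hc : 0 < c) :
    ∫ s in Ioi (0 : ℝ), exp (-(c * s)) = 1 / c := by
  have := integral_exp_mul_Ioi (neg_neg_of_pos hc) 0
  rw [mul_zero, exp_zero, div_neg, neg_div, neg_neg] at this
  simpa only [neg_mul] using this

theorem integrableOn_exp_neg_mul_div_add {c y : ℝ} (hc : 0 < c) (hy : 0 < y) :
    IntegrableOn (fun s => exp (-(c * s)) / (s + y)) (Ioi 0) := by
  refine ((integrableOn_exp_neg_mul_Ioi hc 0).div_const y).mono' ?_ ?_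
  · refine (ContinuousOn.div (by fun_prop) (by fun_prop) fun s hs => ?_).aestronglyMeasurable
      measurableSet_Ioi
    exact (add_pos (mem_Ioi.1 hs) hy).ne'
  · refine ae_restrict_of_forall_mem measurableSet_Ioi fun s hs => ?_
    have hsy : y ≤ s + y := by linarith [mem_Ioi.1 hs]
    rw [norm_div, Real.norm_of_nonneg (exp_pos _).le, Real.norm_of_nonneg (by linarith)]
    gcongr

theorem integral_Ioc_one_div_add {a y : ℝ} (ha : 0 ≤ a) (hy : 0 < y) :
    ∫ s in Ioc 0 a, 1 / (s + y) = log ((a + y) / y) := by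
  rw [← intervalIntegral.integral_of_le ha,
    intervalIntegral.integral_comp_add_right (fun u => 1 / u), zero_add,
    integral_one_div (notMem_uIcc_of_lt hy (by linarith))]

theorem exp_neg_mul_div_add_le {c y s : ℝ} (hc : 0 < c) (hy : 0 ≤ y) (hs : 0 < s) :
    exp (-(c * s)) / (s + y) ≤
      (Ioc 0 c⁻¹).indicator (fun s => 1 / (s + y)) s + c * exp (-(c * s)) := by
  have hsy : 0 < s + y := by linarith
  rcases le_or_gt s c⁻¹ with hsc | hsc
  · rw [indicator_of_mem (mem_Ioc.2 ⟨hs, hsc⟩)]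
    have : exp (-(c * s)) ≤ 1 := exp_le_one_iff.2 (by nlinarith)
    have : exp (-(c * s)) / (s + y) ≤ 1 / (s + y) := by gcongr
    nlinarith [exp_pos (-(c * s))]
  · rw [indicator_of_notMem fun h => hsc.not_ge h.2, zero_add, div_eq_mul_one_div, mul_comm]
    have : 1 / (s + y) ≤ c := by
      rw [div_le_iff₀ hsy]
      nlinarith [mul_inv_cancel₀ hc.ne']
    gcongr

theorem integral_exp_neg_mul_div_add_le {c y : ℝ} (hc : 0 < c) (hy : 0 < y) :
    ∫ s in Ioi (0 : ℝ), exp (-(c * s)) / (s + y) ≤ log (1 + 1 / (c * y)) + 1 := by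
  have hind : IntegrableOn ((Ioc 0 c⁻¹).indicator fun s => 1 / (s + y)) (Ioi 0) := by
    refine (IntegrableOn.integrable_indicator ?_ measurableSet_Ioc).integrableOn
    refine (ContinuousOn.integrableOn_Icc ?_).mono_set Ioc_subset_Icc_self
    exact ContinuousOn.div continuousOn_const (by fun_prop) fun s hs => by
      linarith [hs.1]
  have hexp := (integrableOn_exp_neg_mul_Ioi hc 0).const_mul c
  calc ∫ s in Ioi (0 : ℝ), exp (-(c * s)) / (s + y)
      ≤ ∫ s in Ioi (0 : ℝ),
          (Ioc 0 c⁻¹).indicator (fun s => 1 / (s + y)) s + c * exp (-(c * s)) := by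
        refine integral_mono_of_nonneg (ae_restrict_of_forall_mem measurableSet_Ioi fun s hs => ?_)
          (hind.add hexp)
          (ae_restrict_of_forall_mem measurableSet_Ioi fun s hs =>
            exp_neg_mul_div_add_le hc hy.le hs)
        have : 0 < s + y := by linarith [mem_Ioi.1 hs]
        positivity
    _ = log (1 + 1 / (c * y)) + 1 := by
        rw [integral_add hind hexp,
          setIntegral_indicator measurableSet_Ioc, inter_eq_self_of_subset_right Ioc_subset_Ioi_self,
          integral_Ioc_one_div_add (by positivity) hy, integral_const_mul,
          integral_exp_neg_mul_Ioi_zero hc]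
        congr 1
        · congr 1; field_simp; ring
        · field_simp

theorem exp_div_one_sub_exp_mul_one_add_pow_le {lam y s : ℝ} (m : ℕ) (hlam : 1 ≤ lam)
    (hy : 0 ≤ y) (hs : 0 < s) :
    exp (-(2 * lam * s)) / (1 - exp (-(2 * lam * (s + y)))) * (1 + s ^ m) ≤
      (m ! + 1) * (exp (-(lam * s)) + exp (-(lam * s)) / (s + y) / (2 * lam)) := by
  have hlam0 : 0 < lam := one_pos.trans_le hlam
  have hx : 0 < 2 * lam * (s + y) := by positivity
  have hpoly : 1 + s ^ m ≤ (m ! + 1) * exp (lam * s) :=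
    (one_add_pow_le_mul_exp hs.le m).trans (by gcongr; nlinarith)
  have hexp : exp (-(2 * lam * s)) * exp (lam * s) = exp (-(lam * s)) := by
    rw [← exp_add]; ring_nf
  calc exp (-(2 * lam * s)) / (1 - exp (-(2 * lam * (s + y)))) * (1 + s ^ m)
      = exp (-(2 * lam * s)) * (1 - exp (-(2 * lam * (s + y))))⁻¹ * (1 + s ^ m) := by
        rw [div_eq_mul_inv]
    _ ≤ exp (-(2 * lam * s)) * (1 + (2 * lam * (s + y))⁻¹) * ((m ! + 1) * exp (lam * s)) := by
        gcongr
        exact inv_one_sub_exp_neg_le hx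
    _ = (m ! + 1) * (exp (-(lam * s)) + exp (-(lam * s)) / (s + y) / (2 * lam)) := by
        rw [← hexp]
        field_simp

/-- For every `m ∈ ℕ` there is `C_m` with
`∫_0^∞ e^{-2λs}/(1 - e^{-2λ(s+y)}) (1 + s^m) ds ≤ C_m (1/λ)(1 + log(1 + 1/(λy)))`. -/
theorem tail_integral_estimate (m : ℕ) :
    ∃ C : ℝ, 0 < C ∧ ∀ lam y : ℝ, 1 ≤ lam → 0 < y →
      (∫ s in Set.Ioi (0 : ℝ),
        Real.exp (-(2 * lam * s)) / (1 - Real.exp (-(2 * lam * (s + y)))) * (1 + s ^ m)) ≤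
        C * (1 / lam) * (1 + Real.log (1 + 1 / (lam * y))) := by
  refine ⟨2 * (m ! + 1), by positivity, fun lam y hlam hy => ?_⟩
  have hlam0 : 0 < lam := one_pos.trans_le hlam
  have hL : 0 ≤ log (1 + 1 / (lam * y)) := log_nonneg (le_add_of_nonneg_right (by positivity))
  have hE := integrableOn_exp_neg_mul_Ioi hlam0 0
  have hF := integrableOn_exp_neg_mul_div_add hlam0 hy
  calc (∫ s in Ioi (0 : ℝ),
        exp (-(2 * lam * s)) / (1 - exp (-(2 * lam * (s + y)))) * (1 + s ^ m))
      ≤ ∫ s in Ioi (0 : ℝ),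
          (m ! + 1) * (exp (-(lam * s)) + exp (-(lam * s)) / (s + y) / (2 * lam)) := by
        refine integral_mono_of_nonneg (ae_restrict_of_forall_mem measurableSet_Ioi fun s hs => ?_)
          ((hE.add (hF.div_const _)).const_mul _)
          (ae_restrict_of_forall_mem measurableSet_Ioi fun s hs =>
            exp_div_one_sub_exp_mul_one_add_pow_le m hlam hy.le hs)
        have hs : 0 < s := hs
        have : 0 < 1 - exp (-(2 * lam * (s + y))) :=
          sub_pos.2 (exp_lt_one_iff.2 (by nlinarith))
        positivity
    _ = (m ! + 1) * (1 / lam + (∫ s in Ioi (0 : ℝ), exp (-(lam * s)) / (s + y)) / (2 * lam)) := by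
        rw [integral_const_mul, integral_add hE (hF.div_const _), integral_div,
          integral_exp_neg_mul_Ioi_zero hlam0]
    _ ≤ (m ! + 1) * (1 / lam + (log (1 + 1 / (lam * y)) + 1) / (2 * lam)) := by
        gcongr
        exact integral_exp_neg_mul_div_add_le hlam0 hy
    _ ≤ 2 * (m ! + 1) * (1 / lam) * (1 + log (1 + 1 / (lam * y))) := by
        generalize log (1 + 1 / (lam * y)) = L at hL ⊢
        field_simp
        nlinarith
end

section
/- For all λ > 0 and y > 0, the quantity y·e^{-λy} + (1/λ)·(1 - e^{-2λy}) is comparable to y/(1 + λy): there exist absolute constants c, C > 0 with c·y/(1+λy) ≤ y·e^{-λy} + (1/λ)(1 - e^{-2λy}) ≤ C·y/(1+λy). -/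
/-- `y e^{-λy} + (1/λ)(1 - e^{-2λy}) ∼ y/(1 + λy)` uniformly in `λ, y > 0`. -/
theorem comparable_estimate :
    ∃ c C : ℝ, 0 < c ∧ 0 < C ∧ ∀ lam y : ℝ, 0 < lam → 0 < y →
      c * (y / (1 + lam * y)) ≤
        y * Real.exp (-(lam * y)) + (1 / lam) * (1 - Real.exp (-(2 * lam * y))) ∧
      y * Real.exp (-(lam * y)) + (1 / lam) * (1 - Real.exp (-(2 * lam * y))) ≤
        C * (y / (1 + lam * y)) := by
  refine ⟨1/2, 5, by norm_num, by norm_num, fun lam y hl hy => ?_⟩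
  set t : ℝ := lam * y with ht
  have htpos : 0 < t := mul_pos hl hy
  have h1pos : 0 < 1 + t := by linarith
  set A : ℝ := Real.exp (-(2 * lam * y)) with hAdef
  set B : ℝ := Real.exp (-(lam * y)) with hBdef
  have hApos : 0 < A := Real.exp_pos _
  have hBpos : 0 < B := Real.exp_pos _
  -- A * (1 + 2t) ≤ 1
  have hA1 : A * (1 + 2 * t) ≤ 1 := by
    have h := Real.add_one_le_exp (2 * lam * y)
    have hAe : A * Real.exp (2 * lam * y) = 1 := by
      rw [hAdef, ← Real.exp_add]; simp
    nlinarith [hApos]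
  have hA2 : 1 - 2 * t ≤ A := by
    have h := Real.add_one_le_exp (-(2 * lam * y))
    have : -(2 * lam * y) + 1 ≤ A := h
    nlinarith
  have hA3 : A ≤ 1 := by
    have : (-(2 * lam * y)) ≤ 0 := by nlinarith
    calc A ≤ Real.exp 0 := Real.exp_le_exp.mpr this
    _ = 1 := Real.exp_zero
  have hB1 : B * (1 + t) ≤ 1 := by
    have h := Real.add_one_le_exp (lam * y)
    have hBe : B * Real.exp (lam * y) = 1 := by
      rw [hBdef, ← Real.exp_add]; simp
    nlinarith [hBpos]
  have hlaminv : 1 / lam = y / t := by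
    rw [ht]; field_simp
  constructor
  · -- lower bound
    have key : y / (2 * (1 + t)) ≤ y * (1 - A) / t := by
      rw [div_le_div_iff₀ (by positivity) htpos]
      nlinarith [mul_pos hy htpos, mul_nonneg hy.le (mul_nonneg htpos.le htpos.le)]
    have h1 : (1:ℝ)/2 * (y / (1 + t)) = y / (2 * (1 + t)) := by
      rw [eq_div_iff (by positivity : (2 * (1 + t)) ≠ 0)]
      field_simp
    have h2 : (1 / lam) * (1 - A) = y * (1 - A) / t := by rw [hlaminv]; ring
    rw [h1, h2]
    nlinarith [mul_pos hy hBpos]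
  · -- upper bound
    have k1 : y * B ≤ y / (1 + t) := by
      rw [le_div_iff₀ h1pos]
      nlinarith
    have k2 : y * (1 - A) / t ≤ 4 * (y / (1 + t)) := by
      rw [div_le_iff₀ htpos]
      have h4 : 4 * (y / (1 + t)) * t = 4 * y * t / (1 + t) := by ring
      rw [h4, le_div_iff₀ h1pos]
      nlinarith [mul_pos hy htpos]
    have h2 : (1 / lam) * (1 - A) = y * (1 - A) / t := by rw [hlaminv]; ring
    rw [h2]
    have : y / (1 + t) + 4 * (y / (1 + t)) = 5 * (y / (1 + t)) := by ring
    linarith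
end
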